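/- Increasing the latency of any one miner to the coordinator strictly increases the expected inter-block time (hence strictly decreases the overall system efficiency). Precisely: let X_1,…,X_n be independent exponential random variables with rates h_1,…,h_n > 0, and let d_1,…,d_n ≥ 0 and d'_1,…,d'_n ≥ 0 be shifts with d'_j ≥ d_j for all j and d'_i > d_i for at least one i. Then E[ min_{1≤j≤n} (X_j + d'_j) ] > E[ min_{1≤j≤n} (X_j + d_j) ]. -/

import Mathlib

/-!
Raising the shifts raises `min_j (X j + d j)` pointwise, so it suffices that it rises by a fixed
positive amount on an event of positive probability. On the event that `i` realizes the minimum for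
the shifts `d'`, the minimum for `d'` is `X i + d' i`, while the one for `d` is at most
`X i + d i`, a gap of `d' i - d i > 0`. That event contains the box
`{X i ≤ 1} ∩ ⋂_{j ≠ i} {X j > 1 + d' i - d' j}`, whose probability is a product of
positive factors by independence, since an exponential law charges
every half-line `(x, ∞)` and every `(-∞, x]` with `x > 0`.
-/

open MeasureTheory ProbabilityTheory Real Set

theorem integral_lt_integral_of_ae_le_of_measure_setOf_lt_ne_zero {α : Type*}
    [MeasurableSpace α] {μ : Measure α} {f g : α → ℝ} (hf : Integrable f μ)
    (hg : Integrable g μ) (hfg : f ≤ᵐ[μ] g) (hlt : μ {x | f x < g x} ≠ 0) :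
    ∫ x, f x ∂μ < ∫ x, g x ∂μ := by
  rw [← sub_pos, ← integral_sub hg hf,
    integral_pos_iff_support_of_nonneg_ae (hfg.mono fun _ hx => sub_nonneg.2 hx) (hg.sub hf)]
  exact (pos_iff_ne_zero.2 hlt).trans_le
    (measure_mono fun x hx => Function.mem_support.2 (sub_ne_zero.2 (ne_of_gt hx)))

theorem integrable_ciInf {ι α : Type*} [Fintype ι] [Nonempty ι] [MeasurableSpace α]
    {μ : Measure α} {Y : ι → α → ℝ} (hY : ∀ j, Integrable (Y j) μ) :
    Integrable (fun a => ⨅ j, Y j a) μ := by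
  refine (integrable_finsetSum Finset.univ fun j _ => (hY j).norm).mono'
    (AEMeasurable.iInf fun j => (hY j).aemeasurable).aestronglyMeasurable
    (ae_of_all _ fun a => ?_)
  obtain ⟨j, hj⟩ := exists_eq_ciInf_of_finite (f := fun j => Y j a)
  rw [← hj]
  exact Finset.single_le_sum (fun k _ => norm_nonneg (Y k a)) (Finset.mem_univ j)

theorem ciInf_add_sub_le_ciInf {ι : Type*} [Finite ι] {x c c' : ι → ℝ} {i : ι}
    (hi : ∀ j, x i + c' i ≤ x j + c' j) :
    (⨅ j, (x j + c j)) + (c' i - c i) ≤ ⨅ j, (x j + c' j) := by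
  have : Nonempty ι := ⟨i⟩
  have hle : (⨅ j, (x j + c j)) ≤ x i + c i := ciInf_le (finite_range _).bddBelow i
  have hge : x i + c' i ≤ ⨅ j, (x j + c' j) := le_ciInf hi
  linarith

theorem ProbabilityTheory.iIndepFun.measure_iInter_preimage_pos {ι Ω : Type*} [Fintype ι]
    [MeasurableSpace Ω] {μ : Measure Ω}
    {β : ι → Type*} [∀ j, MeasurableSpace (β j)] {X : ∀ j, Ω → β j}
    (hX : iIndepFun X μ) (hXm : ∀ j, Measurable (X j)) {S : ∀ j, Set (β j)}
    (hS : ∀ j, MeasurableSet (S j)) (hpos : ∀ j, 0 < μ.map (X j) (S j)) :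
    0 < μ (⋂ j, X j ⁻¹' S j) := by
  rw [hX.meas_iInter fun j => ⟨S j, hS j, rfl⟩]
  exact CanonicallyOrderedAdd.prod_pos.2 fun j _ => Measure.map_apply (hXm j) (hS j) ▸ hpos j

section Exponential

variable {r : ℝ}

theorem integrable_id_expMeasure (hr : 0 < r) : Integrable id (expMeasure r) := by
  change Integrable id (volume.withDensity (exponentialPDF r))
  refine (integrable_withDensity_iff (measurable_exponentialPDFReal r).ennreal_ofReal
    (ae_of_all _ fun _ => ENNReal.ofReal_lt_top)).2 ?_
  simp only [ENNReal.toReal_ofReal (exponentialPDFReal_nonneg hr _), id]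
  refine IntegrableOn.integrable_of_forall_notMem_eq_zero (s := Ioi 0) ?_ fun x hx => ?_
  · have hgamma : IntegrableOn (fun x : ℝ => r * (x ^ (1 : ℝ) * rexp (-r * x ^ (1 : ℝ))))
        (Ioi 0) :=
      (integrableOn_rpow_mul_exp_neg_mul_rpow (by norm_num) one_pos hr).const_mul r
    refine hgamma.congr_fun (fun x hx => ?_) measurableSet_Ioi
    simp [exponentialPDFReal, gammaPDFReal, le_of_lt (mem_Ioi.1 hx)]
    ring
  · rw [mem_Ioi, not_lt] at hx
    rcases hx.lt_or_eq with hneg | rfl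
    · simp [exponentialPDFReal, gammaPDFReal, not_le.2 hneg]
    · simp

theorem expMeasure_Iic_pos (hr : 0 < r) {x : ℝ} (hx : 0 < x) : 0 < expMeasure r (Iic x) := by
  have := isProbabilityMeasure_expMeasure hr
  rw [← ofReal_cdf, cdf_expMeasure_eq hr, if_pos hx.le, ENNReal.ofReal_pos, sub_pos,
    exp_lt_one_iff, neg_lt_zero]
  positivity

theorem expMeasure_Ioi_pos (hr : 0 < r) (x : ℝ) : 0 < expMeasure r (Ioi x) := by
  have := isProbabilityMeasure_expMeasure hr
  rw [← compl_Iic, prob_compl_eq_one_sub measurableSet_Iic, ← ofReal_cdf, tsub_pos_iff_lt,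
    ENNReal.ofReal_lt_one, cdf_expMeasure_eq hr]
  split_ifs
  · linarith [exp_pos (-(r * x))]
  · norm_num

theorem integrable_of_map_eq_expMeasure {Ω : Type*} [MeasurableSpace Ω] {μ : Measure Ω}
    {X : Ω → ℝ} (hr : 0 < r) (hXm : Measurable X) (hlaw : μ.map X = expMeasure r) :
    Integrable X μ :=
  (hlaw ▸ integrable_id_expMeasure hr : Integrable id (μ.map X)).comp_measurable hXm

end Exponential

theorem measure_forall_add_le_add_pos {ι Ω : Type*} [Fintype ι] [MeasurableSpace Ω]
    {μ : Measure Ω} {h : ι → ℝ} (hh : ∀ j, 0 < h j) {X : ι → Ω → ℝ}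
    (hXm : ∀ j, Measurable (X j)) (hindep : iIndepFun X μ)
    (hlaw : ∀ j, μ.map (X j) = expMeasure (h j)) (c : ι → ℝ) (i : ι) :
    0 < μ {ω | ∀ j, X i ω + c i ≤ X j ω + c j} := by
  classical
  let S (j : ι) : Set ℝ := if j = i then Iic 1 else Ioi (1 + c i - c j)
  have hS (j : ι) : MeasurableSet (S j) := by
    by_cases hj : j = i <;> simp [S, hj]
  have hbox : 0 < μ (⋂ j, X j ⁻¹' S j) := by
    refine hindep.measure_iInter_preimage_pos hXm hS fun j => hlaw j ▸ ?_
    by_cases hj : j = i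
    · simpa [S, hj] using expMeasure_Iic_pos (hh j) one_pos
    · simpa [S, hj] using expMeasure_Ioi_pos (hh j) (1 + c i - c j)
  refine hbox.trans_le (measure_mono fun ω hω j => ?_)
  have hωi : X i ω ≤ 1 := by simpa [S] using mem_iInter.1 hω i
  by_cases hj : j = i
  · rw [hj]
  · have hωj : 1 + c i - c j < X j ω := by simpa [S, hj] using mem_iInter.1 hω j
    linarith

theorem expectation_min_strict_mono_in_shifts
    {Ω : Type*} [MeasurableSpace Ω] (μ : Measure Ω) [IsProbabilityMeasure μ]
    (n : ℕ) (h : Fin n → ℝ) (hh : ∀ i, 0 < h i)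
    (d d' : Fin n → ℝ)
    (hle : ∀ j, d j ≤ d' j) (i : Fin n) (hlt : d i < d' i)
    (X : Fin n → Ω → ℝ) (hXm : ∀ j, Measurable (X j))
    (hindep : iIndepFun X μ)
    (hlaw : ∀ j, μ.map (X j) = expMeasure (h j)) :
    (∫ ω, (⨅ j : Fin n, (X j ω + d' j)) ∂μ) >
      ∫ ω, (⨅ j : Fin n, (X j ω + d j)) ∂μ := by
  have : Nonempty (Fin n) := ⟨i⟩
  have hint (c : Fin n → ℝ) : Integrable (fun ω => ⨅ j, (X j ω + c j)) μ :=
    integrable_ciInf fun j =>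
      (integrable_of_map_eq_expMeasure (hh j) (hXm j) (hlaw j)).add (integrable_const (c j))
  refine integral_lt_integral_of_ae_le_of_measure_setOf_lt_ne_zero (hint d) (hint d')
    (ae_of_all _ fun ω => ciInf_mono (finite_range _).bddBelow fun j => by linarith [hle j])
    ((measure_forall_add_le_add_pos hh hXm hindep hlaw d' i).trans_le
      (measure_mono fun ω hmin => ?_)).ne'
  have hgap := ciInf_add_sub_le_ciInf (x := fun j => X j ω) (c := d) hmin
  show (⨅ j, (X j ω + d j)) < ⨅ j, (X j ω + d' j)
  linarith
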